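/- arXiv:1905.08539 — 3 statements merged into one kernel-verified Lean document; each statement's English description precedes it below -/
import Mathlib

section
/- The sequence of functions g_n(x) = (2 − x) · ∏_{i=1}^{n} (1 + (1 − x)^(2^i)) converges uniformly to 1/x on every compact subset of the open interval (0, 2). -/
/-!
Writing `y = 1 - x`, the product telescopes through `(1 - y) (1 + y) = 1 - y ^ 2`, so
`x · g_n(x) = 1 - (1 - x) ^ 2 ^ (n + 1)` and `1/x - g_n(x) = (1 - x) ^ 2 ^ (n + 1) / x`.
On a compact `K ⊆ (0, 2)` there is `r < 1` with `|1 - x| ≤ r` on `K`, hence also `1 - r ≤ x`,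
which bounds this error uniformly by `r ^ 2 ^ (n + 1) / (1 - r) → 0`.
-/

open Filter Finset

lemma one_sub_mul_prod_one_add_pow_two_pow {R : Type*} [CommRing R] (y : R) (n : ℕ) :
    (1 - y) * ∏ i ∈ range (n + 1), (1 + y ^ 2 ^ i) = 1 - y ^ 2 ^ (n + 1) := by
  induction n with
  | zero => rw [prod_range_one]; ring
  | succ n ih =>
    rw [prod_range_succ, ← mul_assoc, ih, pow_succ 2 (n + 1), pow_mul]
    ring

lemma prod_Icc_one_add_pow_two_pow {R : Type*} [CommRing R] (y : R) (n : ℕ) :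
    (1 + y) * ∏ i ∈ Icc 1 n, (1 + y ^ 2 ^ i) = ∏ i ∈ range (n + 1), (1 + y ^ 2 ^ i) := by
  rw [range_eq_Ico, prod_eq_prod_Ico_succ_bot n.add_one_pos, zero_add, Ico_add_one_right_eq_Icc,
    pow_zero, pow_one]

lemma one_div_sub_two_sub_mul_prod {x : ℝ} (hx : x ≠ 0) (n : ℕ) :
    1 / x - (2 - x) * ∏ i ∈ Icc 1 n, (1 + (1 - x) ^ 2 ^ i) = (1 - x) ^ 2 ^ (n + 1) / x := by
  have htelescope := one_sub_mul_prod_one_add_pow_two_pow (1 - x) n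
  rw [← prod_Icc_one_add_pow_two_pow, sub_sub_cancel] at htelescope
  rw [eq_div_iff hx, sub_mul, one_div_mul_cancel hx]
  linear_combination -htelescope

lemma IsCompact.exists_abs_one_sub_le_of_subset_Ioo {K : Set ℝ} (hK : IsCompact K)
    (hK' : K ⊆ Set.Ioo 0 2) : ∃ r, 0 ≤ r ∧ r < 1 ∧ ∀ x ∈ K, |1 - x| ≤ r := by
  have hlt : ∀ x ∈ K, -1 < -|1 - x| := fun x hx ↦ by
    obtain ⟨h0, h2⟩ := hK' hx
    rw [neg_lt_neg_iff, abs_lt]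
    constructor <;> linarith
  obtain ⟨a, ha, haK⟩ := hK.exists_forall_le' (by fun_prop) hlt
  refine ⟨max (-a) 0, le_max_right _ _, max_lt (by linarith) one_pos, fun x hx ↦ ?_⟩
  exact le_max_of_le_left (by linarith [haK x hx])

lemma tendsto_pow_two_pow_atTop_nhds_zero {r : ℝ} (hr₀ : 0 ≤ r) (hr₁ : r < 1) :
    Tendsto (fun n : ℕ ↦ r ^ 2 ^ n) atTop (nhds 0) :=
  (tendsto_pow_atTop_nhds_zero_of_lt_one hr₀ hr₁).comp
    (tendsto_pow_atTop_atTop_of_one_lt one_lt_two)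

lemma Metric.tendstoUniformlyOn_of_dist_le {ι α β : Type*} [PseudoMetricSpace β] {l : Filter ι}
    {F : ι → α → β} {f : α → β} {s : Set α} {u : ι → ℝ} (hu : Tendsto u l (nhds 0))
    (hF : ∀ i, ∀ x ∈ s, dist (f x) (F i x) ≤ u i) : TendstoUniformlyOn F f l s := by
  rw [Metric.tendstoUniformlyOn_iff]
  intro ε hε
  filter_upwards [hu.eventually (gt_mem_nhds hε)] with i hi x hx
  exact (hF i x hx).trans_lt hi

theorem stmt_4 (K : Set ℝ) (hK : IsCompact K) (hK' : K ⊆ Set.Ioo (0 : ℝ) 2) :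
    TendstoUniformlyOn
      (fun (n : ℕ) (x : ℝ) => (2 - x) * ∏ i ∈ Finset.Icc 1 n, (1 + (1 - x) ^ (2 ^ i)))
      (fun x => 1 / x) Filter.atTop K := by
  obtain ⟨r, hr₀, hr₁, hrK⟩ := hK.exists_abs_one_sub_le_of_subset_Ioo hK'
  have hdecay : Tendsto (fun n : ℕ ↦ r ^ 2 ^ (n + 1) / (1 - r)) atTop (nhds 0) := by
    simpa using ((tendsto_pow_two_pow_atTop_nhds_zero hr₀ hr₁).comp
      (tendsto_add_atTop_nat 1)).div_const (1 - r)
  refine Metric.tendstoUniformlyOn_of_dist_le hdecay fun n x hx ↦ ?_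
  have hx₀ : 0 < x := (hK' hx).1
  rw [Real.dist_eq, one_div_sub_two_sub_mul_prod hx₀.ne', abs_div, abs_pow, abs_of_pos hx₀]
  have hxK := hrK x hx
  gcongr
  linarith [le_abs_self (1 - x)]
end

section
/- Let w : ℝ → ℝ be bounded and continuous, and let ρ(x) = sin(x) + w(x)·e^(−x). For h ≠ 0 and A ∈ ℝ define ι_{h,A}(x) = ρ(hx + 2πA)/h. Then for every compact L ⊆ ℝ and every ε > 0, there exist h ≠ 0 and A ∈ ℕ such that |ι_{h,A}(x) − x| ≤ ε for all x ∈ L. -/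
/-!
Since `ρ(hx + 2πA) = sin(hx) + w(hx + 2πA)·e^{-hx}·e^{-2πA}`, the map `ι_{h,A}` is `sin(hx)/h`
plus an error. On a compact set `sin(hx)/h` is within `h²|x|³/6` of `x`, so a small `h` makes the
first part close to the identity; for that fixed `h`, the factor `e^{-2πA}` makes the error
uniformly small once `A` is large.
-/

open Real Filter Topology

lemma abs_sin_mul_div_sub_le {h : ℝ} (hh : 0 < h) (x : ℝ) :
    |sin (h * x) / h - x| ≤ h ^ 2 * |x| ^ 3 / 6 := by
  have key := abs_sub_sin_le (h * x)
  rw [abs_sub_comm, abs_mul, abs_of_pos hh] at key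
  calc |sin (h * x) / h - x| = |sin (h * x) - h * x| / h := by
        rw [← abs_of_pos hh, ← abs_div, sub_div, abs_of_pos hh, mul_div_cancel_left₀ _ hh.ne']
    _ ≤ (h * |x|) ^ 3 / 6 / h := by gcongr
    _ = h ^ 2 * |x| ^ 3 / 6 := by field_simp

lemma exists_pos_forall_abs_sin_mul_div_sub_le (R : ℝ) {ε : ℝ} (hε : 0 < ε) :
    ∃ h > 0, ∀ x, |x| ≤ R → |sin (h * x) / h - x| ≤ ε := by
  have hlim : Tendsto (fun h : ℝ ↦ h ^ 2 * R ^ 3 / 6) (𝓝[>] 0) (𝓝 0) := by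
    apply tendsto_nhdsWithin_of_tendsto_nhds
    simpa using ((continuous_pow 2).mul continuous_const).div_const 6 |>.tendsto' 0 _ (by simp)
  obtain ⟨h, hh, hsmall⟩ :=
    (eventually_mem_nhdsWithin.and ((tendsto_order.1 hlim).2 ε hε)).exists
  refine ⟨h, hh, fun x hx ↦ (abs_sin_mul_div_sub_le hh x).trans ?_⟩
  have : |x| ^ 3 ≤ R ^ 3 := pow_le_pow_left₀ (abs_nonneg x) hx 3
  calc h ^ 2 * |x| ^ 3 / 6 ≤ h ^ 2 * R ^ 3 / 6 := by gcongr
    _ ≤ ε := hsmall.le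

lemma exists_nat_forall_abs_mul_exp_neg_div_le {w : ℝ → ℝ} {M : ℝ} (hM : ∀ y, |w y| ≤ M)
    {h : ℝ} (hh : 0 < h) (R : ℝ) {ε : ℝ} (hε : 0 < ε) :
    ∃ A : ℕ, ∀ x, |x| ≤ R →
      |w (h * x + 2 * π * A) * exp (-(h * x + 2 * π * A)) / h| ≤ ε := by
  have hM0 : 0 ≤ M := (abs_nonneg _).trans (hM 0)
  set C := M * exp (h * R) / h
  have hlim : Tendsto (fun A : ℕ ↦ C * exp (-(2 * π * A))) atTop (𝓝 0) := by
    simpa using (tendsto_exp_neg_atTop_nhds_zero.comp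
      (tendsto_natCast_atTop_atTop.const_mul_atTop two_pi_pos)).const_mul C
  obtain ⟨A, hA⟩ := ((tendsto_order.1 hlim).2 ε hε).exists
  refine ⟨A, fun x hx ↦ ?_⟩
  have hexp : exp (-(h * x + 2 * π * A)) ≤ exp (h * R) * exp (-(2 * π * A)) := by
    rw [← exp_add]
    gcongr
    nlinarith [neg_abs_le x]
  rw [abs_div, abs_mul, abs_of_pos (exp_pos _), abs_of_pos hh]
  calc |w (h * x + 2 * π * A)| * exp (-(h * x + 2 * π * A)) / h
      ≤ M * (exp (h * R) * exp (-(2 * π * A))) / h := by gcongr; exact hM _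
    _ = C * exp (-(2 * π * A)) := by ring
    _ ≤ ε := hA.le

theorem stmt_7_general (w : ℝ → ℝ) (hw_bdd : ∃ M : ℝ, ∀ x, |w x| ≤ M)
    (ρ : ℝ → ℝ) (hρ : ∀ x, ρ x = Real.sin x + w x * Real.exp (-x))
    (L : Set ℝ) (hL : IsCompact L) :
    ∀ ε > 0, ∃ h : ℝ, h ≠ 0 ∧ ∃ A : ℕ, ∀ x ∈ L,
      |ρ (h * x + 2 * Real.pi * A) / h - x| ≤ ε := by
  intro ε hε
  obtain ⟨M, hM⟩ := hw_bdd
  obtain ⟨R, hR⟩ : ∃ R, ∀ x ∈ L, |x| ≤ R := by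
    simpa only [Real.norm_eq_abs] using hL.isBounded.exists_norm_le
  obtain ⟨h, hh, hsin⟩ := exists_pos_forall_abs_sin_mul_div_sub_le R (half_pos hε)
  obtain ⟨A, hA⟩ := exists_nat_forall_abs_mul_exp_neg_div_le hM hh R (half_pos hε)
  refine ⟨h, hh.ne', A, fun x hx ↦ ?_⟩
  have hsplit : ρ (h * x + 2 * π * A) / h - x = (sin (h * x) / h - x)
      + w (h * x + 2 * π * A) * exp (-(h * x + 2 * π * A)) / h := by
    rw [hρ, mul_comm (2 * π), sin_add_nat_mul_two_pi]
    ring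
  rw [hsplit]
  linarith [abs_add_le (sin (h * x) / h - x)
    (w (h * x + 2 * π * A) * exp (-(h * x + 2 * π * A)) / h), hsin x (hR x hx), hA x (hR x hx)]

theorem stmt_7 (w : ℝ → ℝ) (hw_bdd : ∃ M : ℝ, ∀ x, |w x| ≤ M) (hw_cont : Continuous w)
    (ρ : ℝ → ℝ) (hρ : ∀ x, ρ x = Real.sin x + w x * Real.exp (-x))
    (L : Set ℝ) (hL : IsCompact L) :
    ∀ ε > 0, ∃ h : ℝ, h ≠ 0 ∧ ∃ A : ℕ, ∀ x ∈ L,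
      |ρ (h * x + 2 * Real.pi * A) / h - x| ≤ ε :=
  stmt_7_general w hw_bdd ρ hρ L hL
end

section
/- Let ρ(x) = x². Let K ⊆ ℝⁿ be compact. Then the set of functions K → ℝᵐ computable by feedforward neural networks of arbitrary depth and width n + m + 1 with activation ρ in each hidden neuron is dense in C(K; ℝᵐ) with respect to the uniform norm. -/
/-- Apply a list of hidden layers: each layer is an affine map followed by
componentwise application of the activation `ρ`. -/
noncomputable def applyLayers (ρ : ℝ → ℝ) (w : ℕ) :
    List ((Fin w → ℝ) →ᵃ[ℝ] (Fin w → ℝ)) → (Fin w → ℝ) → (Fin w → ℝ)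
  | [], v => v
  | A :: rest, v => applyLayers ρ w rest (fun i => ρ (A v i))

/-- `IsNetworkFun ρ n m w f` means `f : ℝⁿ → ℝᵐ` is computed by a feedforward
network of arbitrary depth and width `w`: an affine map `A₀ : ℝⁿ → ℝʷ` followed by
`ρ` componentwise, then finitely many hidden layers (affine map `ℝʷ → ℝʷ` followed by
`ρ` componentwise), then an affine output map `ℝʷ → ℝᵐ`. -/
def IsNetworkFun (ρ : ℝ → ℝ) (n m w : ℕ) (f : (Fin n → ℝ) → (Fin m → ℝ)) : Prop :=
  ∃ (A₀ : (Fin n → ℝ) →ᵃ[ℝ] (Fin w → ℝ))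
    (hidden : List ((Fin w → ℝ) →ᵃ[ℝ] (Fin w → ℝ)))
    (Aout : (Fin w → ℝ) →ᵃ[ℝ] (Fin m → ℝ)),
    ∀ x, f x = Aout (applyLayers ρ w hidden (fun i => ρ (A₀ x i)))

/-!
Affine post-processing of the last hidden layer is free, so it suffices to approximate,
uniformly on `K`, the successive states of a register machine with the `n` inputs, `m`
accumulators and one scratch register. A hidden layer squares the registers it is asked to
square and passes every other register `y` through the approximate identity
`c (y / c + 1 / 2) ^ 2 - c / 4 = y + y ^ 2 / c` with `c` large. Hence the machine can load an
affine function `ℓ` of the input into the scratch register, square it `r` times and add a multiple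
of `ℓ ^ 2 ^ r` to an accumulator. Polarization shows that linear combinations of such powers are
all polynomials, and polynomials are dense in `C(K, ℝ)` by Stone–Weierstrass.
-/

open Finset

section Polarization

variable {𝕜 : Type*} [Field 𝕜] [CharZero 𝕜]

theorem mem_of_forall_sum_pow_smul_mem {V : Type*} [AddCommGroup V] [Module 𝕜 V]
    {M : Submodule 𝕜 V} {d : ℕ} {w : ℕ → V}
    (hM : ∀ t : 𝕜, ∑ k ∈ range (d + 1), t ^ k • w k ∈ M) {k : ℕ} (hk : k ≤ d) : w k ∈ M := by
  set A := Matrix.vandermonde fun i : Fin (d + 1) => (i : 𝕜)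
  have hA : IsUnit A.det := isUnit_iff_ne_zero.2 <|
    Matrix.det_vandermonde_ne_zero_iff.2 fun i j h => Fin.ext (by exact_mod_cast h)
  have hrow : ∀ i, ∑ j, A i j • w j ∈ M := fun i => by
    simpa [A, Fin.sum_univ_eq_sum_range (fun j => (i : 𝕜) ^ j • w j)] using hM i
  have hw : w k = ∑ i, A⁻¹ ⟨k, by omega⟩ i • ∑ j, A i j • w j := by
    simp_rw [Finset.smul_sum, smul_smul]
    rw [Finset.sum_comm]
    simp_rw [← Finset.sum_smul, ← Matrix.mul_apply, A.nonsing_inv_mul hA, Matrix.one_apply,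
      ite_smul, one_smul, zero_smul]
    simp
  rw [hw]
  exact M.sum_mem fun i _ => M.smul_mem _ (hrow i)

variable {R : Type*} [CommRing R] [Algebra 𝕜 R]

/-- The induction step replaces `ℓ` by `ℓ + t • g` and extracts the coefficient of `t`. -/
theorem list_prod_mul_pow_mem_span (S : Submodule 𝕜 R) (N : ℕ) :
    ∀ L : List R, (∀ g ∈ L, g ∈ S) → L.length ≤ N → ∀ ℓ ∈ S,
      L.prod * ℓ ^ (N - L.length) ∈ Submodule.span 𝕜 {p | ∃ ℓ ∈ S, p = ℓ ^ N}
  | [], _, _, ℓ, hℓ => by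
    simpa using Submodule.subset_span (R := 𝕜) (s := {p | ∃ ℓ ∈ S, p = ℓ ^ N}) ⟨ℓ, hℓ, rfl⟩
  | g :: L, hL, hN, ℓ, hℓ => by
    set M := N - L.length with hM
    have hM0 : M ≠ 0 := by simp at hN; omega
    have key := mem_of_forall_sum_pow_smul_mem (k := 1) (d := M)
      (w := fun k => (M.choose k : 𝕜) • (L.prod * g ^ k * ℓ ^ (M - k))) (fun t => by
        have := list_prod_mul_pow_mem_span S N L (fun g' hg' => hL g' (by simp [hg']))
          (by simp at hN; omega) (t • g + ℓ) (S.add_mem (S.smul_mem t (hL g (by simp))) hℓ)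
        convert this using 1
        rw [add_pow, Finset.mul_sum]
        refine Finset.sum_congr rfl fun k _ => ?_
        simp only [smul_pow, smul_smul, Algebra.smul_mul_assoc, Algebra.mul_smul_comm]
        rw [← hM, mul_smul, Nat.cast_smul_eq_nsmul, nsmul_eq_mul]
        congr 1
        ring) (by omega)
    have hMk : (M.choose 1 : 𝕜) ≠ 0 := by simpa using hM0
    convert Submodule.smul_mem _ (M.choose 1 : 𝕜)⁻¹ key using 1
    rw [inv_smul_smul₀ hMk, List.prod_cons, List.length_cons, pow_one, Nat.sub_add_eq, ← hM]
    ring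

theorem adjoin_le_span_pow_two_pow (S : Submodule 𝕜 R) (hS : 1 ∈ S) :
    Subalgebra.toSubmodule (Algebra.adjoin 𝕜 (S : Set R)) ≤
      Submodule.span 𝕜 {p | ∃ ℓ ∈ S, ∃ r : ℕ, p = ℓ ^ 2 ^ r} := by
  rw [Algebra.adjoin_eq_span, Submodule.span_le]
  intro x hx
  obtain ⟨L, hL, rfl⟩ := Submonoid.exists_list_of_mem_closure hx
  have hN := Nat.lt_two_pow_self (n := L.length)
  refine Submodule.span_mono ?_ (by
    simpa using list_prod_mul_pow_mem_span S (2 ^ L.length) L hL hN.le 1 hS)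
  rintro _ ⟨ℓ, hℓ, rfl⟩
  exact ⟨ℓ, hℓ, L.length, rfl⟩

end Polarization

section Networks

variable {ρ : ℝ → ℝ} {n w k : ℕ}

theorem applyLayers_append (L₁ L₂ : List ((Fin w → ℝ) →ᵃ[ℝ] (Fin w → ℝ))) (v : Fin w → ℝ) :
    applyLayers ρ w (L₁ ++ L₂) v = applyLayers ρ w L₂ (applyLayers ρ w L₁ v) := by
  induction L₁ generalizing v with
  | nil => rfl
  | cons A L ih => exact ih _

theorem continuous_layer (hρ : Continuous ρ) {E : Type*} [NormedAddCommGroup E]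
    [NormedSpace ℝ E] [FiniteDimensional ℝ E] (A : E →ᵃ[ℝ] (Fin w → ℝ)) :
    Continuous fun v i => ρ (A v i) :=
  continuous_pi fun i => hρ.comp ((continuous_apply i).comp A.continuous_of_finiteDimensional)

theorem continuous_applyLayers (hρ : Continuous ρ) :
    ∀ L : List ((Fin w → ℝ) →ᵃ[ℝ] (Fin w → ℝ)), Continuous (applyLayers ρ w L)
  | [] => continuous_id
  | A :: L => (continuous_applyLayers hρ L).comp (continuous_layer hρ A)

variable (ρ w) in
def NetApproximable (K : Set (Fin n → ℝ)) (F : K → Fin k → ℝ) : Prop :=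
  ∀ ε > 0, ∃ (A₀ : (Fin n → ℝ) →ᵃ[ℝ] (Fin w → ℝ)) (hidden : List ((Fin w → ℝ) →ᵃ[ℝ] (Fin w → ℝ)))
    (D : (Fin w → ℝ) →ᵃ[ℝ] (Fin k → ℝ)),
    ∀ x : K, ‖D (applyLayers ρ w hidden fun i => ρ (A₀ x i)) - F x‖ ≤ ε

namespace NetApproximable

variable {K : Set (Fin n → ℝ)} {F : K → Fin k → ℝ}

theorem exists_bound (hρ : Continuous ρ) (hK : IsCompact K) (hF : NetApproximable ρ w K F) :
    ∃ R, 0 ≤ R ∧ ∀ x, ‖F x‖ ≤ R := by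
  obtain ⟨A₀, hidden, D, hD⟩ := hF 1 one_pos
  have hc : Continuous fun x => D (applyLayers ρ w hidden fun i => ρ (A₀ x i)) :=
    D.continuous_of_finiteDimensional.comp
      ((continuous_applyLayers hρ hidden).comp (continuous_layer hρ A₀))
  obtain ⟨C, hC⟩ := hK.exists_bound_of_continuousOn hc.continuousOn
  refine ⟨max C 0 + 1, by positivity, fun x => ?_⟩
  have h₁ := hC x x.2
  have h₂ := norm_sub_norm_le (F x) (D (applyLayers ρ w hidden fun i => ρ (A₀ x i)))
  rw [norm_sub_rev] at h₂
  linarith [hD x, le_max_left C 0]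

theorem comp_affine {l : ℕ} (hF : NetApproximable ρ w K F)
    (Ψ : (Fin k → ℝ) →ᵃ[ℝ] (Fin l → ℝ)) : NetApproximable ρ w K fun x => Ψ (F x) := by
  intro ε hε
  set L := LinearMap.toContinuousLinearMap Ψ.linear
  obtain ⟨A₀, hidden, D, hD⟩ := hF (ε / (‖L‖ + 1)) (by positivity)
  refine ⟨A₀, hidden, Ψ.comp D, fun x => ?_⟩
  set y := applyLayers ρ w hidden fun i => ρ (A₀ x i)
  calc ‖Ψ.comp D y - Ψ (F x)‖ = ‖L (D y - F x)‖ := by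
        rw [AffineMap.comp_apply, ← vsub_eq_sub, ← Ψ.linearMap_vsub]; rfl
    _ ≤ ‖L‖ * (ε / (‖L‖ + 1)) := (L.le_opNorm _).trans (by gcongr; exact hD x)
    _ ≤ ε := by
        rw [mul_div_assoc', div_le_iff₀ (by positivity)]
        nlinarith [norm_nonneg L]

theorem of_coord_affine {l : ℕ} {G : K → Fin l → ℝ} (hF : NetApproximable ρ w K F)
    (hG : ∀ i, ∃ φ : (Fin k → ℝ) →ᵃ[ℝ] ℝ, ∀ x, G x i = φ (F x)) : NetApproximable ρ w K G := by
  choose φ hφ using hG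
  convert hF.comp_affine (AffineMap.pi φ) using 1
  exact funext fun x => funext fun i => hφ i x

end NetApproximable

end Networks

section SquareLayer

theorem abs_sq_sub_sq_le {s t R δ : ℝ} (ht : |t| ≤ R) (hst : |s - t| ≤ δ) :
    |s ^ 2 - t ^ 2| ≤ δ * (2 * R + δ) := by
  have hsum : |s + t| ≤ 2 * R + δ := by
    calc |s + t| = |(s - t) + 2 * t| := by ring_nf
      _ ≤ |s - t| + 2 * |t| := by
          refine (abs_add_le _ _).trans (le_of_eq ?_); rw [abs_mul, abs_two]
      _ ≤ 2 * R + δ := by linarith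
  rw [show s ^ 2 - t ^ 2 = (s - t) * (s + t) by ring, abs_mul]
  exact mul_le_mul hst hsum (abs_nonneg _) ((abs_nonneg _).trans hst)

theorem mul_sq_div_add_half_sub {c : ℝ} (hc : c ≠ 0) (s : ℝ) :
    c * (s / c + 1 / 2) ^ 2 - c / 4 = s + s ^ 2 / c := by
  field_simp
  ring

theorem abs_add_sq_div_sub_le {s t R δ c : ℝ} (hc : 0 < c) (ht : |t| ≤ R)
    (hst : |s - t| ≤ δ) : |s + s ^ 2 / c - t| ≤ δ + (R + δ) ^ 2 / c := by
  have hs : |s| ≤ R + δ := by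
    calc |s| = |(s - t) + t| := by ring_nf
      _ ≤ R + δ := (abs_add_le _ _).trans (by linarith)
  calc |s + s ^ 2 / c - t| = |(s - t) + s ^ 2 / c| := by ring_nf
    _ ≤ |s - t| + s ^ 2 / c := by
        refine (abs_add_le _ _).trans (le_of_eq ?_)
        rw [abs_of_nonneg (a := s ^ 2 / c) (by positivity)]
    _ ≤ δ + (R + δ) ^ 2 / c := by
        have : s ^ 2 ≤ (R + δ) ^ 2 := by
          rw [← sq_abs]; exact pow_le_pow_left₀ (abs_nonneg s) hs 2
        exact add_le_add hst (div_le_div_of_nonneg_right this hc.le)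

variable {ι : Type*} [DecidableEq ι]

def sqOn (S : Finset ι) (z : ι → ℝ) : ι → ℝ := fun i => if i ∈ S then z i ^ 2 else z i

@[simp] theorem sqOn_empty (z : ι → ℝ) : sqOn ∅ z = z := by
  ext i; simp [sqOn]

variable [Fintype ι]

theorem exists_affine_sq_layer (S : Finset ι) {R ε : ℝ} (hR : 0 ≤ R) (hε : 0 < ε) :
    ∃ δ > 0, ∃ B D : (ι → ℝ) →ᵃ[ℝ] (ι → ℝ), ∀ y z, ‖z‖ ≤ R → ‖y - z‖ ≤ δ →
      ‖D (fun i => B y i ^ 2) - sqOn S z‖ ≤ ε := by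
  set δ := min 1 (ε / (2 * (2 * R + 1)))
  set c := 2 * (R + 1) ^ 2 / ε
  have hδ : 0 < δ := lt_min one_pos (by positivity)
  have hc : 0 < c := by positivity
  have hδε : δ * (2 * R + 1) ≤ ε / 2 := by
    calc δ * (2 * R + 1) ≤ ε / (2 * (2 * R + 1)) * (2 * R + 1) := by gcongr; exact min_le_right _ _
      _ = ε / 2 := by field_simp
  let proj := fun i : ι => (LinearMap.proj (R := ℝ) (φ := fun _ : ι => ℝ) i).toAffineMap
  refine ⟨δ, hδ,
    AffineMap.pi fun i => if i ∈ S then proj i else c⁻¹ • proj i + AffineMap.const ℝ _ (1 / 2),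
    AffineMap.pi fun i => if i ∈ S then proj i else c • proj i - AffineMap.const ℝ _ (c / 4),
    fun y z hz hyz => (pi_norm_le_iff_of_nonneg hε.le).2 fun i => ?_⟩
  have hzi : |z i| ≤ R := (norm_le_pi_norm z i).trans hz
  have hyzi : |y i - z i| ≤ δ := (norm_le_pi_norm (y - z) i).trans hyz
  have hδ1 : δ ≤ 1 := min_le_left _ _
  by_cases hi : i ∈ S
  · simp only [sqOn, hi, if_true, AffineMap.pi_apply, proj, LinearMap.coe_toAffineMap,
      LinearMap.proj_apply, Real.norm_eq_abs, Pi.sub_apply]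
    calc |y i ^ 2 - z i ^ 2| ≤ δ * (2 * R + δ) := abs_sq_sub_sq_le hzi hyzi
      _ ≤ δ * (2 * R + 1) := by gcongr
      _ ≤ ε := by linarith
  · have hcR : (R + 1) ^ 2 / c = ε / 2 := by simp only [c]; field_simp
    simp only [one_div, AffineMap.pi_apply, Pi.sub_apply, hi, ↓reduceIte, AffineMap.coe_sub,
      AffineMap.coe_smul, LinearMap.coe_toAffineMap, LinearMap.coe_proj, AffineMap.coe_const,
      Pi.smul_apply, Function.eval, AffineMap.coe_add, Pi.add_apply, smul_eq_mul,
      Function.const_apply, sqOn, Real.norm_eq_abs, proj]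
    rw [inv_mul_eq_div, ← one_div, mul_sq_div_add_half_sub hc.ne']
    calc |y i + y i ^ 2 / c - z i| ≤ δ + (R + δ) ^ 2 / c := abs_add_sq_div_sub_le hc hzi hyzi
      _ ≤ ε / 2 + (R + 1) ^ 2 / c := by gcongr; nlinarith
      _ = ε := by rw [hcR]; ring

end SquareLayer

namespace NetApproximable

variable {n w : ℕ} {K : Set (Fin n → ℝ)}

theorem comp_sqOn {F : K → Fin w → ℝ} (hK : IsCompact K)
    (hF : NetApproximable (fun t => t ^ 2) w K F) (S : Finset (Fin w)) :
    NetApproximable (fun t => t ^ 2) w K fun x => sqOn S (F x) := by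
  intro ε hε
  obtain ⟨R, hR, hFR⟩ := hF.exists_bound (continuous_pow 2) hK
  obtain ⟨δ, hδ, B, D', hBD⟩ := exists_affine_sq_layer S hR hε
  obtain ⟨A₀, hidden, D, hD⟩ := hF δ hδ
  exact ⟨A₀, hidden ++ [B.comp D], D', fun x => by
    simpa [applyLayers_append, applyLayers] using hBD _ _ (hFR x) (hD x)⟩

end NetApproximable

theorem netApproximable_of_coord_affine {n w : ℕ} {K : Set (Fin n → ℝ)} (hK : IsCompact K)
    {G : K → Fin w → ℝ} (hG : ∀ i, ∃ φ : (Fin n → ℝ) →ᵃ[ℝ] ℝ, ∀ x, G x i = φ x) :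
    NetApproximable (fun t => t ^ 2) w K G := by
  choose φ hφ using hG
  set Ψ := AffineMap.pi φ
  have hGΨ : G = fun x : K => Ψ x := funext fun x => funext fun i => hφ i x
  intro ε hε
  obtain ⟨R, hR⟩ := hK.exists_bound_of_continuousOn Ψ.continuous_of_finiteDimensional.continuousOn
  obtain ⟨δ, hδ, B, D, hBD⟩ :=
    exists_affine_sq_layer (∅ : Finset (Fin w)) (le_max_right R 0) hε
  refine ⟨B.comp Ψ, [], D, fun x => ?_⟩
  simpa [hGΨ, applyLayers] using
    hBD _ _ ((hR x x.2).trans (le_max_left R 0)) (by simpa using hδ.le)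

section RegisterMachine

variable {n m : ℕ} {K : Set (Fin n → ℝ)}

/-- Register contents: the input `x`, then `m` accumulators `H x`, then one scratch register. -/
def regState (H : K → Fin m → ℝ) (s : K → ℝ) (x : K) : Fin (n + m + 1) → ℝ :=
  Fin.snoc (Fin.append (x : Fin n → ℝ) (H x)) (s x)

variable (K) in
def Reachable (H : K → Fin m → ℝ) : Prop :=
  ∃ s, NetApproximable (fun t => t ^ 2) (n + m + 1) K (regState H s)

theorem reachable_zero (hK : IsCompact K) : Reachable K (0 : K → Fin m → ℝ) := by
  refine ⟨0, netApproximable_of_coord_affine hK fun i => ?_⟩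
  induction i using Fin.lastCases with
  | last => exact ⟨0, fun x => by simp [regState]⟩
  | cast k =>
    induction k using Fin.addCases with
    | left i => exact ⟨(LinearMap.proj i).toAffineMap, fun x => by simp [regState]⟩
    | right j =>
      refine ⟨0, fun x => ?_⟩
      simp only [regState, Fin.snoc_castSucc, Fin.append_right]
      simp

variable {H : K → Fin m → ℝ} {s : K → ℝ}

theorem NetApproximable.regState_load
    (hs : NetApproximable (fun t => t ^ 2) (n + m + 1) K (regState H s))
    (ℓ : (Fin n → ℝ) →ᵃ[ℝ] ℝ) :
    NetApproximable (fun t => t ^ 2) (n + m + 1) K (regState H fun x => ℓ x) := by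
  refine hs.of_coord_affine fun i => ?_
  induction i using Fin.lastCases with
  | last =>
    refine ⟨ℓ.comp (LinearMap.funLeft ℝ ℝ fun i => (Fin.castAdd m i).castSucc).toAffineMap,
      fun x => ?_⟩
    simp only [regState, AffineMap.comp_apply, LinearMap.coe_toAffineMap, Fin.snoc_last]
    congr 1
    ext i
    simp [LinearMap.funLeft_apply]
  | cast k => exact ⟨(LinearMap.proj k.castSucc).toAffineMap, fun x => by simp [regState]⟩

theorem NetApproximable.regState_sq (hK : IsCompact K)
    (hs : NetApproximable (fun t => t ^ 2) (n + m + 1) K (regState H s)) :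
    NetApproximable (fun t => t ^ 2) (n + m + 1) K (regState H fun x => s x ^ 2) := by
  convert hs.comp_sqOn hK {Fin.last _} using 1
  funext x i
  induction i using Fin.lastCases <;> simp [regState, sqOn]

theorem NetApproximable.regState_accumulate
    (hs : NetApproximable (fun t => t ^ 2) (n + m + 1) K (regState H s)) (u : Fin m → ℝ) :
    NetApproximable (fun t => t ^ 2) (n + m + 1) K (regState (H + fun x => s x • u) s) := by
  refine hs.of_coord_affine fun i => ?_
  induction i using Fin.lastCases with
  | last => exact ⟨(LinearMap.proj (Fin.last _)).toAffineMap, fun x => by simp [regState]⟩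
  | cast k =>
    induction k using Fin.addCases with
    | left i => exact ⟨(LinearMap.proj (Fin.castAdd m i).castSucc).toAffineMap,
        fun x => by simp [regState]⟩
    | right j =>
      refine ⟨(LinearMap.proj (Fin.natAdd n j).castSucc +
        u j • LinearMap.proj (Fin.last _)).toAffineMap, fun x => ?_⟩
      simp only [regState, LinearMap.coe_toAffineMap, LinearMap.add_apply, LinearMap.smul_apply,
        LinearMap.proj_apply, Fin.snoc_castSucc, Fin.snoc_last, Fin.append_right]
      simp [mul_comm]

end RegisterMachine

section Increments

variable {n m : ℕ} {K : Set (Fin n → ℝ)}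

theorem Reachable.add_pow_two_pow_smul (hK : IsCompact K) {H : K → Fin m → ℝ}
    (hH : Reachable K H) (ℓ : (Fin n → ℝ) →ᵃ[ℝ] ℝ) (r : ℕ) (u : Fin m → ℝ) :
    Reachable K (H + fun x : K => ℓ x ^ 2 ^ r • u) := by
  obtain ⟨s, hs⟩ := hH
  have hpow : ∀ r : ℕ, NetApproximable (fun t => t ^ 2) (n + m + 1) K
      (regState H fun x => ℓ x ^ 2 ^ r) := by
    intro r
    induction r with
    | zero => simpa using hs.regState_load ℓ
    | succ r ih => simpa [pow_succ, pow_mul] using ih.regState_sq hK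
  exact ⟨_, (hpow r).regState_accumulate u⟩

variable (K) in
def affineFunctionsOn : Submodule ℝ (K → ℝ) where
  carrier := {g | ∃ ℓ : (Fin n → ℝ) →ᵃ[ℝ] ℝ, g = fun x : K => ℓ x}
  add_mem' := by
    rintro _ _ ⟨ℓ₁, rfl⟩ ⟨ℓ₂, rfl⟩
    exact ⟨ℓ₁ + ℓ₂, rfl⟩
  zero_mem' := ⟨0, rfl⟩
  smul_mem' := by
    rintro c _ ⟨ℓ, rfl⟩
    exact ⟨c • ℓ, rfl⟩

variable (m K) in
def increments : Submodule ℝ (K → ℝ) where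
  carrier := {g | ∀ (u : Fin m → ℝ) (H : K → Fin m → ℝ),
    Reachable K H → Reachable K (H + fun x => g x • u)}
  add_mem' := by
    intro a b ha hb u H hH
    convert hb u _ (ha u H hH) using 1
    ext x j
    simp [add_smul, add_assoc]
  zero_mem' := by
    intro u H hH
    convert hH using 1
    ext x j
    simp
  smul_mem' := by
    intro c g hg u H hH
    convert hg (c • u) H hH using 1
    ext x j
    simp only [Pi.add_apply, Pi.smul_apply, smul_eq_mul]
    ring

theorem adjoin_affineFunctionsOn_le_increments (hK : IsCompact K) :
    Subalgebra.toSubmodule (Algebra.adjoin ℝ (affineFunctionsOn K : Set (K → ℝ))) ≤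
      increments m K := by
  have h1 : (1 : K → ℝ) ∈ affineFunctionsOn K := ⟨AffineMap.const ℝ _ 1, rfl⟩
  refine (adjoin_le_span_pow_two_pow _ h1).trans ?_
  rw [Submodule.span_le]
  rintro _ ⟨_, ⟨ℓ, rfl⟩, r, rfl⟩ u H hH
  exact hH.add_pow_two_pow_smul hK ℓ r u

theorem reachable_of_mem_adjoin (hK : IsCompact K) {p : Fin m → K → ℝ}
    (hp : ∀ j, p j ∈ Algebra.adjoin ℝ (affineFunctionsOn K : Set (K → ℝ))) :
    Reachable K fun x j => p j x := by
  have key := Finset.sum_induction (s := univ)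
    (fun j (x : K) => p j x • (Pi.single j 1 : Fin m → ℝ))
    (fun G => ∀ H, Reachable K H → Reachable K (H + G))
    (fun a b ha hb H hH => by simpa [add_assoc] using hb _ (ha H hH))
    (fun H hH => by simpa using hH)
    (fun j _ H hH => adjoin_affineFunctionsOn_le_increments hK (hp j) (Pi.single j 1) H hH)
  convert key 0 (reachable_zero hK) using 1
  ext x j
  simp [Finset.sum_apply, Pi.single_apply]

theorem Reachable.exists_network {H : K → Fin m → ℝ} (hH : Reachable K H) {ε : ℝ} (hε : 0 < ε) :
    ∃ g, IsNetworkFun (fun t => t ^ 2) n m (n + m + 1) g ∧ ∀ x : K, ‖g x - H x‖ ≤ ε := by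
  obtain ⟨s, hs⟩ := hH
  obtain ⟨A₀, hidden, D, hD⟩ :=
    hs.comp_affine (LinearMap.funLeft ℝ ℝ fun j => (Fin.natAdd n j).castSucc).toAffineMap ε hε
  refine ⟨fun x => D (applyLayers (fun t => t ^ 2) (n + m + 1) hidden fun i => (A₀ x i) ^ 2),
    ⟨A₀, hidden, D, fun x => rfl⟩, fun x => ?_⟩
  convert hD x using 3
  ext j
  simp only [regState, LinearMap.coe_toAffineMap, LinearMap.funLeft_apply,
    Fin.snoc_castSucc, Fin.append_right]

end Increments

theorem exists_mem_adjoin_affineFunctionsOn_near {n : ℕ} {K : Set (Fin n → ℝ)} (hK : IsCompact K)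
    {f : K → ℝ} (hf : Continuous f) {ε : ℝ} (hε : 0 < ε) :
    ∃ p ∈ Algebra.adjoin ℝ (affineFunctionsOn K : Set (K → ℝ)), ∀ x, ‖p x - f x‖ < ε := by
  have := isCompact_iff_compactSpace.mp hK
  let A := (Algebra.adjoin ℝ (affineFunctionsOn K : Set (K → ℝ))).comap
    (ContinuousMap.coeFnAlgHom ℝ)
  have hA : A.SeparatesPoints := by
    intro x y hxy
    obtain ⟨i, hi⟩ := Function.ne_iff.1 (Subtype.coe_ne_coe.2 hxy)
    let coord : C(K, ℝ) :=
      ⟨fun x => (x : Fin n → ℝ) i, (continuous_apply i).comp continuous_subtype_val⟩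
    refine ⟨coord, ⟨coord, ?_, rfl⟩, hi⟩
    exact Algebra.subset_adjoin ⟨(LinearMap.proj i).toAffineMap, rfl⟩
  obtain ⟨p, hp⟩ := ContinuousMap.exists_mem_subalgebra_near_continuous_of_separatesPoints
    A hA f hf ε hε
  exact ⟨p, p.2, hp⟩

theorem stmt_15 (n m : ℕ) (ρ : ℝ → ℝ) (hρ : ∀ x, ρ x = x ^ 2)
    (K : Set (Fin n → ℝ)) (hK : IsCompact K)
    (f : (Fin n → ℝ) → (Fin m → ℝ)) (hf : ContinuousOn f K) :
    ∀ ε > 0, ∃ g : (Fin n → ℝ) → (Fin m → ℝ),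
      IsNetworkFun ρ n m (n + m + 1) g ∧ ∀ x ∈ K, ‖f x - g x‖ ≤ ε := by
  obtain rfl : ρ = fun t => t ^ 2 := funext hρ
  intro ε hε
  choose p hp hpf using fun j => exists_mem_adjoin_affineFunctionsOn_near hK
    ((continuous_apply j).comp hf.domRestrict) (half_pos hε)
  obtain ⟨g, hg, hgp⟩ := (reachable_of_mem_adjoin hK hp).exists_network (half_pos hε)
  refine ⟨g, hg, fun x hx => ?_⟩
  set P : Fin m → ℝ := fun j => p j ⟨x, hx⟩
  have hfP : ‖f x - P‖ ≤ ε / 2 := (pi_norm_le_iff_of_nonneg (half_pos hε).le).2 fun j => by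
    rw [Pi.sub_apply, norm_sub_rev]; exact (hpf j ⟨x, hx⟩).le
  calc ‖f x - g x‖ ≤ ‖f x - P‖ + ‖P - g x‖ := norm_sub_le_norm_sub_add_norm_sub _ _ _
    _ ≤ ε / 2 + ε / 2 := add_le_add hfP (by rw [norm_sub_rev]; exact hgp ⟨x, hx⟩)
    _ = ε := add_halves ε
end
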